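/- There exists a universal constant C > 0 such that for all v, r ∈ 2πℤ³ with v ≠ r: Σ_{q ∈ 2πℤ³, q ≠ v, q ≠ r} |q − v|^{−2} · |q − r|^{−2} ≤ C / |v − r|. -/

import Mathlib

/-- The lattice point `2π·n ∈ ℝ³` associated with `n ∈ ℤ³`. -/
noncomputable def latticePt (n : Fin 3 → ℤ) : EuclideanSpace ℝ (Fin 3) :=
  WithLp.toLp 2 (fun i => 2 * Real.pi * (n i))

open scoped ENNReal NNReal

namespace LatticeConv

/-! ### The Euclidean and sup norms of integer vectors -/

noncomputable def En (j : Fin 3 → ℤ) : ℝ := Real.sqrt (∑ i, ((j i : ℝ))^2)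

lemma En_nonneg (j : Fin 3 → ℤ) : 0 ≤ En j := Real.sqrt_nonneg _

lemma abs_le_En (j : Fin 3 → ℤ) (i : Fin 3) : |((j i : ℝ))| ≤ En j := by
  rw [← Real.sqrt_sq_eq_abs]
  exact Real.sqrt_le_sqrt (Finset.single_le_sum (fun i _ => sq_nonneg ((j i : ℝ)))
    (Finset.mem_univ i))

lemma one_le_En {j : Fin 3 → ℤ} (hj : j ≠ 0) : 1 ≤ En j := by
  obtain ⟨i, hi⟩ : ∃ i, j i ≠ 0 := by
    by_contra h
    push_neg at h
    exact hj (funext h)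
  have h1 : (1 : ℤ) ≤ |j i| := by
    have := abs_pos.mpr hi
    omega
  have h2 : (1:ℝ) ≤ |((j i : ℝ))| := by
    rw [← Int.cast_abs]
    exact_mod_cast h1
  exact h2.trans (abs_le_En j i)

def Msup (j : Fin 3 → ℤ) : ℕ := Finset.univ.sup fun i => (j i).natAbs

lemma natAbs_le_Msup (j : Fin 3 → ℤ) (i : Fin 3) : (j i).natAbs ≤ Msup j :=
  Finset.le_sup (f := fun i => (j i).natAbs) (Finset.mem_univ i)

lemma exists_Msup (j : Fin 3 → ℤ) : ∃ i, Msup j = (j i).natAbs := by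
  obtain ⟨i, -, hi⟩ := Finset.exists_mem_eq_sup Finset.univ Finset.univ_nonempty
    (fun i => (j i).natAbs)
  exact ⟨i, hi⟩

lemma Msup_le_En (j : Fin 3 → ℤ) : (Msup j : ℝ) ≤ En j := by
  obtain ⟨i, hi⟩ := exists_Msup j
  rw [hi]
  calc ((j i).natAbs : ℝ) = |((j i : ℝ))| := by rw [Nat.cast_natAbs, Int.cast_abs]
    _ ≤ En j := abs_le_En j i

lemma Msup_eq_zero {j : Fin 3 → ℤ} (h : Msup j = 0) : j = 0 := by
  funext i
  have := natAbs_le_Msup j i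
  show j i = 0
  omega

lemma Msup_ne_zero {j : Fin 3 → ℤ} {t : ℕ} (ht : 1 ≤ t) (hj : Msup j = t) : j ≠ 0 := by
  intro h
  subst h
  have : Msup (0 : Fin 3 → ℤ) = 0 := by
    apply Nat.le_antisymm _ (Nat.zero_le _)
    obtain ⟨i, hi⟩ := exists_Msup (0 : Fin 3 → ℤ)
    simp [hi]
  omega

lemma norm_latticePt_sub (k m : Fin 3 → ℤ) :
    ‖latticePt k - latticePt m‖ = 2 * Real.pi * En (k - m) := by
  have h2π : (0:ℝ) ≤ 2 * Real.pi := by positivity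
  have hpt : ∀ i, ‖(latticePt k - latticePt m) i‖ ^ 2
      = (2 * Real.pi)^2 * (((k - m) i : ℝ))^2 := by
    intro i
    have : (latticePt k - latticePt m) i = 2 * Real.pi * (k i) - 2 * Real.pi * (m i) := rfl
    rw [this]
    simp only [Pi.sub_apply, Real.norm_eq_abs, sq_abs, Int.cast_sub]
    ring
  rw [EuclideanSpace.norm_eq]
  simp_rw [hpt]
  rw [← Finset.mul_sum, Real.sqrt_mul (sq_nonneg _), Real.sqrt_sq h2π, En]

/-! ### The elementary inequality -/

lemma key_ineq {A B D : ℝ} (hA : 0 < A) (hB : 0 < B) (hD : 0 < D) (h : D ≤ A + B) :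
    (A^2)⁻¹ * (B^2)⁻¹ ≤
      16 * ((A^2)⁻¹ * ((A + D)^2)⁻¹) + 16 * ((B^2)⁻¹ * ((B + D)^2)⁻¹) := by
  rcases le_total A B with hAB | hAB
  · have h1 : (B^2)⁻¹ ≤ 16 * ((A + D)^2)⁻¹ := by
      rw [← one_div, show (16:ℝ) * ((A + D)^2)⁻¹ = 16 / (A + D)^2 by ring,
        div_le_div_iff₀ (by positivity) (by positivity)]
      nlinarith
    have h2 : (A^2)⁻¹ * (B^2)⁻¹ ≤ (A^2)⁻¹ * (16 * ((A + D)^2)⁻¹) :=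
      mul_le_mul_of_nonneg_left h1 (by positivity)
    have h3 : (0:ℝ) ≤ 16 * ((B^2)⁻¹ * ((B + D)^2)⁻¹) := by positivity
    nlinarith
  · have h1 : (A^2)⁻¹ ≤ 16 * ((B + D)^2)⁻¹ := by
      rw [← one_div, show (16:ℝ) * ((B + D)^2)⁻¹ = 16 / (B + D)^2 by ring,
        div_le_div_iff₀ (by positivity) (by positivity)]
      nlinarith
    have h2 : (B^2)⁻¹ * (A^2)⁻¹ ≤ (B^2)⁻¹ * (16 * ((B + D)^2)⁻¹) :=
      mul_le_mul_of_nonneg_left h1 (by positivity)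
    have h3 : (0:ℝ) ≤ 16 * ((A^2)⁻¹ * ((A + D)^2)⁻¹) := by positivity
    nlinarith

/-! ### The shells in `ℤ³` -/

noncomputable def shell (t : ℕ) : Finset (Fin 3 → ℤ) :=
  (Fintype.piFinset fun _ => Finset.Icc (-(t:ℤ)) t) \
    (Fintype.piFinset fun _ => Finset.Icc (-(t:ℤ) + 1) ((t:ℤ) - 1))

lemma mem_shell {j : Fin 3 → ℤ} {t : ℕ} (ht : 1 ≤ t) (hj : Msup j = t) : j ∈ shell t := by
  rw [shell, Finset.mem_sdiff]
  constructor
  · rw [Fintype.mem_piFinset]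
    intro i
    rw [Finset.mem_Icc]
    have := natAbs_le_Msup j i
    omega
  · rw [Fintype.mem_piFinset]
    intro hall
    obtain ⟨i, hi⟩ := exists_Msup j
    have h2 := hall i
    rw [Finset.mem_Icc] at h2
    omega

lemma card_shell_le {t : ℕ} (ht : 1 ≤ t) : (shell t).card ≤ 26 * t^2 := by
  have hsub : (Fintype.piFinset fun _ : Fin 3 => Finset.Icc (-(t:ℤ) + 1) ((t:ℤ) - 1)) ⊆
      (Fintype.piFinset fun _ : Fin 3 => Finset.Icc (-(t:ℤ)) t) := by
    intro j hj
    rw [Fintype.mem_piFinset] at hj ⊢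
    intro i
    have := hj i
    rw [Finset.mem_Icc] at this ⊢
    omega
  have c1 : (Fintype.piFinset fun _ : Fin 3 => Finset.Icc (-(t:ℤ)) t).card = (2*t+1)^3 := by
    rw [Fintype.card_piFinset]
    have : (Finset.Icc (-(t:ℤ)) t).card = 2*t+1 := by
      rw [Int.card_Icc]
      omega
    simp [this]
  have c2 : (Fintype.piFinset fun _ : Fin 3 => Finset.Icc (-(t:ℤ) + 1) ((t:ℤ) - 1)).card
      = (2*t-1)^3 := by
    rw [Fintype.card_piFinset]
    have : (Finset.Icc (-(t:ℤ) + 1) ((t:ℤ) - 1)).card = 2*t-1 := by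
      rw [Int.card_Icc]
      omega
    simp [this]
  rw [shell, Finset.card_sdiff_of_subset hsub, c1, c2]
  obtain ⟨s, rfl⟩ : ∃ s, t = s + 1 := ⟨t - 1, by omega⟩
  have h1 : 2*(s+1) - 1 = 2*s+1 := by omega
  rw [h1, Nat.sub_le_iff_le_add]
  nlinarith [sq_nonneg s]

/-! ### The auxiliary series -/

lemma sum_range_le (D : ℝ) (hD : 1 ≤ D) (N : ℕ) :
    ∑ t ∈ Finset.range N, (((t:ℝ) + D)^2)⁻¹ ≤ 2 / D := by
  have hD0 : (0:ℝ) < D := lt_of_lt_of_le one_pos hD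
  have claim : ∀ M : ℕ, ∑ t ∈ Finset.range (M+1), (((t:ℝ) + D)^2)⁻¹
      ≤ 2 / D - ((M:ℝ) + D)⁻¹ := by
    intro M
    induction M with
    | zero =>
      simp only [Finset.sum_range_one, Nat.cast_zero, zero_add]
      have e1 : (D^2)⁻¹ ≤ D⁻¹ := by
        rw [← one_div, ← one_div, div_le_div_iff₀ (by positivity) hD0]
        nlinarith
      have e2 : 2 / D - D⁻¹ = D⁻¹ := by
        field_simp
        norm_num
      linarith
    | succ M ih =>
      rw [Finset.sum_range_succ]
      have hx : (0:ℝ) < (M:ℝ) + D := by positivity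
      have step : (((M:ℝ) + 1 + D)^2)⁻¹ ≤ ((M:ℝ) + D)⁻¹ - ((M:ℝ) + 1 + D)⁻¹ := by
        have hy : (0:ℝ) < (M:ℝ) + 1 + D := by positivity
        have e3 : ((M:ℝ) + D)⁻¹ - ((M:ℝ) + 1 + D)⁻¹
            = (((M:ℝ) + D) * ((M:ℝ) + 1 + D))⁻¹ := by
          rw [← one_div, ← one_div, div_sub_div _ _ (ne_of_gt hx) (ne_of_gt hy), ← one_div]
          ring_nf
        rw [e3, ← one_div, ← one_div, div_le_div_iff₀ (by positivity) (by positivity)]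
        nlinarith
      have hcast : ((M+1 : ℕ):ℝ) = (M:ℝ) + 1 := by push_cast; ring
      rw [hcast]
      linarith
  cases N with
  | zero => simp; positivity
  | succ M =>
    have := claim M
    have hx : (0:ℝ) ≤ ((M:ℝ) + D)⁻¹ := by positivity
    linarith

lemma summable_series (D : ℝ) (hD : 1 ≤ D) :
    Summable (fun t : ℕ => (((t:ℝ) + D)^2)⁻¹) :=
  summable_of_sum_range_le (fun n => by positivity) (sum_range_le D hD)

lemma tsum_series_le (D : ℝ) (hD : 1 ≤ D) :
    ∑' t : ℕ, (((t:ℝ) + D)^2)⁻¹ ≤ 2 / D :=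
  Real.tsum_le_of_sum_range_le (fun n => by positivity) (sum_range_le D hD)

/-! ### The dominating function `phi` and its lattice sum -/

noncomputable def phi (D : ℝ) (j : Fin 3 → ℤ) : ℝ :=
  if j = 0 then 0
  else 16 * (((2 * Real.pi * En j)^2)⁻¹ * ((2 * Real.pi * En j + D)^2)⁻¹)

lemma phi_nonneg (D : ℝ) (j : Fin 3 → ℤ) : 0 ≤ phi D j := by
  unfold phi
  split
  · exact le_rfl
  · positivity

lemma phi_le (D : ℝ) (hD : 0 ≤ D) {t : ℕ} (ht : 1 ≤ t) {j : Fin 3 → ℤ} (hMj : Msup j = t) :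
    phi D j ≤ 16 * ((((t:ℝ))^2)⁻¹ * (((t:ℝ) + D)^2)⁻¹) := by
  have hj0 : j ≠ 0 := Msup_ne_zero ht hMj
  have htR : (1:ℝ) ≤ (t:ℝ) := by exact_mod_cast ht
  have hE : (t:ℝ) ≤ En j := by
    have := Msup_le_En j
    rw [hMj] at this
    exact this
  have hπ : (1:ℝ) ≤ 2 * Real.pi := by nlinarith [Real.pi_gt_three]
  have hA : (t:ℝ) ≤ 2 * Real.pi * En j := by nlinarith [En_nonneg j]
  have ht0 : (0:ℝ) < (t:ℝ) := by linarith
  have hA0 : (0:ℝ) < 2 * Real.pi * En j := lt_of_lt_of_le ht0 hA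
  have i1 : ((2 * Real.pi * En j)^2)⁻¹ ≤ (((t:ℝ))^2)⁻¹ := by
    rw [← one_div, ← one_div, div_le_div_iff₀ (pow_pos hA0 2) (pow_pos ht0 2)]
    nlinarith
  have i2 : ((2 * Real.pi * En j + D)^2)⁻¹ ≤ (((t:ℝ) + D)^2)⁻¹ := by
    rw [← one_div, ← one_div,
      div_le_div_iff₀ (by positivity : (0:ℝ) < (2 * Real.pi * En j + D)^2)
        (by positivity : (0:ℝ) < ((t:ℝ) + D)^2)]
    nlinarith
  rw [phi, if_neg hj0]
  have := mul_le_mul i1 i2 (by positivity) (by positivity)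
  nlinarith

lemma fiber_bound (D : ℝ) (hD : 1 ≤ D) (t : ℕ) :
    ∑' j : {j : Fin 3 → ℤ // Msup j = t}, ENNReal.ofReal (phi D j.1)
      ≤ ENNReal.ofReal (416 * (((t:ℝ) + D)^2)⁻¹) := by
  rcases Nat.eq_zero_or_pos t with rfl | ht
  · have hz : ∀ j : {j : Fin 3 → ℤ // Msup j = 0}, ENNReal.ofReal (phi D j.1) = 0 := by
      rintro ⟨j, hj⟩
      have := Msup_eq_zero hj
      subst this
      simp [phi]
    rw [tsum_congr hz]
    simp
  · have hsub : ∑' j : {j : Fin 3 → ℤ // Msup j = t}, ENNReal.ofReal (phi D j.1)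
        = ∑' j : Fin 3 → ℤ,
            Set.indicator {j | Msup j = t} (fun j => ENNReal.ofReal (phi D j)) j :=
      tsum_subtype {j | Msup j = t} (fun j => ENNReal.ofReal (phi D j))
    rw [hsub]
    have heq : ∑' j : Fin 3 → ℤ,
        Set.indicator {j | Msup j = t} (fun j => ENNReal.ofReal (phi D j)) j
        = ∑ j ∈ shell t,
            Set.indicator {j | Msup j = t} (fun j => ENNReal.ofReal (phi D j)) j := by
      apply tsum_eq_sum
      intro j hj
      exact Set.indicator_of_notMem (s := {j | Msup j = t})
        (fun hmem => hj (mem_shell ht hmem)) _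
    rw [heq]
    have hbd : ∀ j ∈ shell t,
        Set.indicator {j | Msup j = t} (fun j => ENNReal.ofReal (phi D j)) j
          ≤ ENNReal.ofReal (16 * ((((t:ℝ))^2)⁻¹ * (((t:ℝ) + D)^2)⁻¹)) := by
      intro j _
      by_cases hmem : Msup j = t
      · rw [Set.indicator_of_mem (s := {j | Msup j = t}) hmem]
        exact ENNReal.ofReal_le_ofReal (phi_le D (by linarith) ht hmem)
      · rw [Set.indicator_of_notMem (s := {j | Msup j = t}) hmem]
        exact zero_le
    calc ∑ j ∈ shell t, Set.indicator {j | Msup j = t} (fun j => ENNReal.ofReal (phi D j)) j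
        ≤ (shell t).card • ENNReal.ofReal (16 * ((((t:ℝ))^2)⁻¹ * (((t:ℝ) + D)^2)⁻¹)) :=
          Finset.sum_le_card_nsmul _ _ _ hbd
      _ = ((shell t).card : ℝ≥0∞) * ENNReal.ofReal (16 * ((((t:ℝ))^2)⁻¹ * (((t:ℝ) + D)^2)⁻¹)) :=
          nsmul_eq_mul _ _
      _ ≤ ((26 * t^2 : ℕ) : ℝ≥0∞)
            * ENNReal.ofReal (16 * ((((t:ℝ))^2)⁻¹ * (((t:ℝ) + D)^2)⁻¹)) :=
          mul_le_mul_left (Nat.cast_le.mpr (card_shell_le ht)) _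
      _ ≤ ENNReal.ofReal (416 * (((t:ℝ) + D)^2)⁻¹) := by
          rw [← ENNReal.ofReal_natCast, ← ENNReal.ofReal_mul (by positivity)]
          apply ENNReal.ofReal_le_ofReal
          have htR : (0:ℝ) < (t:ℝ) := by exact_mod_cast ht
          have hc : ((26 * t^2 : ℕ):ℝ) = 26 * (t:ℝ)^2 := by push_cast; ring
          rw [hc]
          have hinv : (t:ℝ)^2 * (((t:ℝ))^2)⁻¹ = 1 := mul_inv_cancel₀ (by positivity)
          nlinarith [inv_nonneg.mpr (sq_nonneg ((t:ℝ) + D))]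

lemma tsum_phi_ennreal (D : ℝ) (hD : 1 ≤ D) :
    ∑' j : Fin 3 → ℤ, ENNReal.ofReal (phi D j) ≤ ENNReal.ofReal (832 / D) := by
  have h1 : ∑' j : Fin 3 → ℤ, ENNReal.ofReal (phi D j)
      = ∑' (t : ℕ) (j : {j : Fin 3 → ℤ // Msup j = t}), ENNReal.ofReal (phi D j.1) := by
    rw [← (Equiv.sigmaFiberEquiv Msup).tsum_eq (fun j => ENNReal.ofReal (phi D j)),
      ENNReal.tsum_sigma']
    rfl
  rw [h1]
  calc ∑' (t : ℕ) (j : {j : Fin 3 → ℤ // Msup j = t}), ENNReal.ofReal (phi D j.1)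
      ≤ ∑' t : ℕ, ENNReal.ofReal (416 * (((t:ℝ) + D)^2)⁻¹) :=
        ENNReal.tsum_le_tsum (fiber_bound D hD)
    _ = ENNReal.ofReal (∑' t : ℕ, 416 * (((t:ℝ) + D)^2)⁻¹) :=
        (ENNReal.ofReal_tsum_of_nonneg (fun t => by positivity)
          ((summable_series D hD).mul_left 416)).symm
    _ ≤ ENNReal.ofReal (832 / D) := by
        apply ENNReal.ofReal_le_ofReal
        rw [tsum_mul_left]
        have := tsum_series_le D hD
        have h416 : (0:ℝ) ≤ 416 := by norm_num
        calc (416:ℝ) * ∑' t : ℕ, (((t:ℝ) + D)^2)⁻¹ ≤ 416 * (2 / D) :=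
              mul_le_mul_of_nonneg_left this h416
          _ = 832 / D := by ring

lemma summable_phi (D : ℝ) (hD : 1 ≤ D) : Summable (phi D) := by
  have hne : ∑' j : Fin 3 → ℤ, ENNReal.ofReal (phi D j) ≠ ⊤ :=
    ne_top_of_le_ne_top ENNReal.ofReal_ne_top (tsum_phi_ennreal D hD)
  exact (ENNReal.summable_toReal hne).congr
    (fun j => ENNReal.toReal_ofReal (phi_nonneg D j))

lemma tsum_phi_le (D : ℝ) (hD : 1 ≤ D) : ∑' j : Fin 3 → ℤ, phi D j ≤ 832 / D := by
  have hD0 : (0:ℝ) < D := lt_of_lt_of_le one_pos hD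
  calc ∑' j : Fin 3 → ℤ, phi D j
      = (∑' j : Fin 3 → ℤ, ENNReal.ofReal (phi D j)).toReal := by
        rw [ENNReal.tsum_toReal_eq (fun j => ENNReal.ofReal_ne_top)]
        exact tsum_congr fun j => (ENNReal.toReal_ofReal (phi_nonneg D j)).symm
    _ ≤ (ENNReal.ofReal (832 / D)).toReal :=
        ENNReal.toReal_mono ENNReal.ofReal_ne_top (tsum_phi_ennreal D hD)
    _ = 832 / D := ENNReal.toReal_ofReal (by positivity)

lemma rpow_neg_two_eq {x : ℝ} (hx : 0 ≤ x) : x ^ (-(2:ℝ)) = (x^2)⁻¹ := by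
  rw [Real.rpow_neg hx]
  congr 1
  rw [show ((2:ℝ)) = ((2:ℕ):ℝ) by norm_num, Real.rpow_natCast]

end LatticeConv

open LatticeConv in
/-- **Lattice convolution estimate** (used for (eq:Vetaeta)):
there is a universal `C > 0` such that for all distinct `v = 2πm`, `r = 2πn` in `2πℤ³`,
`Σ_{q ∈ 2πℤ³, q ≠ v, q ≠ r} |q−v|^{−2}|q−r|^{−2} ≤ C/|v−r|` (the sum being summable). -/
theorem lattice_convolution :
    ∃ C > 0, ∀ m n : Fin 3 → ℤ, m ≠ n →
      Summable (fun k : {k : Fin 3 → ℤ // k ≠ m ∧ k ≠ n} =>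
        ‖latticePt k.1 - latticePt m‖ ^ (-(2 : ℝ)) * ‖latticePt k.1 - latticePt n‖ ^ (-(2 : ℝ))) ∧
      ∑' k : {k : Fin 3 → ℤ // k ≠ m ∧ k ≠ n},
        ‖latticePt k.1 - latticePt m‖ ^ (-(2 : ℝ)) * ‖latticePt k.1 - latticePt n‖ ^ (-(2 : ℝ))
        ≤ C / ‖latticePt m - latticePt n‖ := by
  refine ⟨1664, by norm_num, fun m n hmn => ?_⟩
  have hπ : (1:ℝ) ≤ 2 * Real.pi := by nlinarith [Real.pi_gt_three]
  set D := ‖latticePt m - latticePt n‖ with hDdef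
  have hEmn : 1 ≤ En (m - n) := one_le_En (sub_ne_zero.mpr hmn)
  have hD1 : 1 ≤ D := by
    rw [hDdef, norm_latticePt_sub]
    nlinarith
  have hD0 : (0:ℝ) < D := lt_of_lt_of_le one_pos hD1
  set f : {k : Fin 3 → ℤ // k ≠ m ∧ k ≠ n} → ℝ := fun k =>
    ‖latticePt k.1 - latticePt m‖ ^ (-(2:ℝ)) * ‖latticePt k.1 - latticePt n‖ ^ (-(2:ℝ))
    with hfdef
  have hfg : ∀ k : {k : Fin 3 → ℤ // k ≠ m ∧ k ≠ n},
      f k ≤ phi D (k.1 - m) + phi D (k.1 - n) := by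
    rintro ⟨k, hkm, hkn⟩
    have hAeq : ‖latticePt k - latticePt m‖ = 2 * Real.pi * En (k - m) :=
      norm_latticePt_sub k m
    have hBeq : ‖latticePt k - latticePt n‖ = 2 * Real.pi * En (k - n) :=
      norm_latticePt_sub k n
    have hkm0 : k - m ≠ 0 := sub_ne_zero.mpr hkm
    have hkn0 : k - n ≠ 0 := sub_ne_zero.mpr hkn
    have hA1 : (1:ℝ) ≤ 2 * Real.pi * En (k - m) := by
      nlinarith [one_le_En hkm0]
    have hB1 : (1:ℝ) ≤ 2 * Real.pi * En (k - n) := by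
      nlinarith [one_le_En hkn0]
    have hA0 : (0:ℝ) < 2 * Real.pi * En (k - m) := lt_of_lt_of_le one_pos hA1
    have hB0 : (0:ℝ) < 2 * Real.pi * En (k - n) := lt_of_lt_of_le one_pos hB1
    have htri : D ≤ 2 * Real.pi * En (k - m) + 2 * Real.pi * En (k - n) := by
      have h := dist_triangle (latticePt m) (latticePt k) (latticePt n)
      rw [dist_eq_norm, dist_eq_norm, dist_eq_norm,
        norm_sub_rev (latticePt m) (latticePt k), hAeq, hBeq] at h
      exact h
    have hphi1 : phi D (k - m)
        = 16 * (((2 * Real.pi * En (k - m))^2)⁻¹ * ((2 * Real.pi * En (k - m) + D)^2)⁻¹) := by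
      rw [phi, if_neg hkm0]
    have hphi2 : phi D (k - n)
        = 16 * (((2 * Real.pi * En (k - n))^2)⁻¹ * ((2 * Real.pi * En (k - n) + D)^2)⁻¹) := by
      rw [phi, if_neg hkn0]
    have hfeq : f ⟨k, hkm, hkn⟩
        = ((2 * Real.pi * En (k - m))^2)⁻¹ * ((2 * Real.pi * En (k - n))^2)⁻¹ := by
      rw [hfdef]
      simp only
      rw [hAeq, hBeq, rpow_neg_two_eq (le_of_lt hA0), rpow_neg_two_eq (le_of_lt hB0)]
    rw [hfeq, hphi1, hphi2]
    exact key_ineq hA0 hB0 hD0 htri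
  have hsum_phi : Summable (phi D) := summable_phi D hD1
  have hinj_m : Function.Injective (fun k : {k : Fin 3 → ℤ // k ≠ m ∧ k ≠ n} => k.1 - m) := by
    intro a b hab
    exact Subtype.ext (by simpa [sub_left_injective.eq_iff] using hab)
  have hinj_n : Function.Injective (fun k : {k : Fin 3 → ℤ // k ≠ m ∧ k ≠ n} => k.1 - n) := by
    intro a b hab
    exact Subtype.ext (by simpa [sub_left_injective.eq_iff] using hab)
  have hsum_m : Summable (fun k : {k : Fin 3 → ℤ // k ≠ m ∧ k ≠ n} => phi D (k.1 - m)) :=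
    hsum_phi.comp_injective hinj_m
  have hsum_n : Summable (fun k : {k : Fin 3 → ℤ // k ≠ m ∧ k ≠ n} => phi D (k.1 - n)) :=
    hsum_phi.comp_injective hinj_n
  have hsum_g : Summable (fun k : {k : Fin 3 → ℤ // k ≠ m ∧ k ≠ n} =>
      phi D (k.1 - m) + phi D (k.1 - n)) := hsum_m.add hsum_n
  have hf_nonneg : ∀ k, 0 ≤ f k := by
    intro k
    exact mul_nonneg (Real.rpow_nonneg (norm_nonneg _) _) (Real.rpow_nonneg (norm_nonneg _) _)
  have hsum_f : Summable f := Summable.of_nonneg_of_le hf_nonneg hfg hsum_g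
  refine ⟨hsum_f, ?_⟩
  have hm_le : ∑' k : {k : Fin 3 → ℤ // k ≠ m ∧ k ≠ n}, phi D (k.1 - m) ≤ 832 / D :=
    le_trans
      (Summable.tsum_le_tsum_of_inj _ hinj_m (fun c _ => phi_nonneg D c) (fun k => le_rfl)
        hsum_m hsum_phi)
      (tsum_phi_le D hD1)
  have hn_le : ∑' k : {k : Fin 3 → ℤ // k ≠ m ∧ k ≠ n}, phi D (k.1 - n) ≤ 832 / D :=
    le_trans
      (Summable.tsum_le_tsum_of_inj _ hinj_n (fun c _ => phi_nonneg D c) (fun k => le_rfl)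
        hsum_n hsum_phi)
      (tsum_phi_le D hD1)
  calc ∑' k : {k : Fin 3 → ℤ // k ≠ m ∧ k ≠ n}, f k
      ≤ ∑' k : {k : Fin 3 → ℤ // k ≠ m ∧ k ≠ n}, (phi D (k.1 - m) + phi D (k.1 - n)) :=
        Summable.tsum_le_tsum hfg hsum_f hsum_g
    _ = (∑' k : {k : Fin 3 → ℤ // k ≠ m ∧ k ≠ n}, phi D (k.1 - m))
        + ∑' k : {k : Fin 3 → ℤ // k ≠ m ∧ k ≠ n}, phi D (k.1 - n) := Summable.tsum_add hsum_m hsum_n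
    _ ≤ 832 / D + 832 / D := add_le_add hm_le hn_le
    _ = 1664 / D := by ring
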